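/- Let $k$ be a field and let $\sigma$ be the $k$-automorphism of the rational function field $k(x,y,z)$ defined by $\sigma: x \mapsto y \mapsto z \mapsto x$. Then $k(x,y,z)^{\langle\sigma\rangle} = k(s_1, u, v)$, where $s_1 = x+y+z$, $u = (x^2y + y^2z + z^2x - 3xyz)/(x^2+y^2+z^2-xy-yz-zx)$, and $v = (xy^2 + yz^2 + zx^2 - 3xyz)/(x^2+y^2+z^2-xy-yz-zx)$. -/

import Mathlib

/-!
The generator `σ` has order 3, so by Artin's theorem the fixed field has codimension 3 in
`K = k(x,y,z)`, and it contains `L = k(s₁, u, v)`. With `N = x² + y² + z² - xy - yz - zx =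
s₁² - 3e₂`, clearing denominators gives `e₂ = s₁(u + v) - 3(u² - uv + v²)` and
`e₃ = s₁uv - u³ - v³`, so `x` is a root of the cubic `(X - x)(X - y)(X - z)` over `L`.
Moreover `(3x² - 2s₁x + e₂) y = uN - x(s₁ - x)² + 4x(e₂ - x(s₁ - x))` with
`3x² - 2s₁x + e₂ = (x - y)(x - z) ≠ 0`, so `y` and then `z = s₁ - x - y` lie in `L(x)`.
Hence `K = L(x)` has degree at most 3 over `L`, which forces `L` to be the whole fixed field.
-/

namespace Masuda

def denom {R : Type*} [CommRing R] (x y z : R) : R :=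
  x ^ 2 + y ^ 2 + z ^ 2 - x * y - y * z - z * x

theorem map_denom {R S : Type*} [CommRing R] [CommRing S] (f : R →+* S) (x y z : R) :
    f (denom x y z) = denom (f x) (f y) (f z) := by
  simp [denom]

variable {F : Type*} [Field F] {x y z : F}

def u (x y z : F) : F := (x ^ 2 * y + y ^ 2 * z + z ^ 2 * x - 3 * (x * y * z)) / denom x y z

def v (x y z : F) : F := (x * y ^ 2 + y * z ^ 2 + z * x ^ 2 - 3 * (x * y * z)) / denom x y z

theorem u_rotate : u y z x = u x y z := by
  unfold u denom; congr 1 <;> ring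

theorem v_rotate : v y z x = v x y z := by
  unfold v denom; congr 1 <;> ring

theorem map_u {F' G : Type*} [Field F'] [FunLike G F F'] [RingHomClass G F F'] (f : G) :
    f (u x y z) = u (f x) (f y) (f z) := by
  simp [u, denom, map_div₀, map_ofNat]

theorem map_v {F' G : Type*} [Field F'] [FunLike G F F'] [RingHomClass G F F'] (f : G) :
    f (v x y z) = v (f x) (f y) (f z) := by
  simp [v, denom, map_div₀, map_ofNat]

theorem esymm_two_eq (hN : denom x y z ≠ 0) :
    (x + y + z) * (u x y z + v x y z) - 3 * (u x y z ^ 2 - u x y z * v x y z + v x y z ^ 2) =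
      x * y + y * z + z * x := by
  unfold u v; field_simp; unfold denom; ring

theorem esymm_three_eq (hN : denom x y z ≠ 0) :
    (x + y + z) * u x y z * v x y z - u x y z ^ 3 - v x y z ^ 3 = x * y * z := by
  unfold u v; field_simp; unfold denom; ring

theorem y_mem_of_x_mem {S : Type*} [SetLike S F] [SubfieldClass S F] {T : S}
    (hN : denom x y z ≠ 0) (hxy : x ≠ y) (hxz : x ≠ z) (hx : x ∈ T) (hs : x + y + z ∈ T)
    (he : x * y + y * z + z * x ∈ T) (hu : u x y z ∈ T) : y ∈ T := by
  have hd : 3 * x ^ 2 - 2 * (x + y + z) * x + (x * y + y * z + z * x) ≠ 0 := by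
    convert mul_ne_zero (sub_ne_zero.2 hxy) (sub_ne_zero.2 hxz) using 1; ring
  have key : y = (u x y z * ((x + y + z) ^ 2 - 3 * (x * y + y * z + z * x))
      - x * (x + y + z - x) ^ 2 + 4 * x * (x * y + y * z + z * x - x * (x + y + z - x))) /
      (3 * x ^ 2 - 2 * (x + y + z) * x + (x * y + y * z + z * x)) := by
    rw [eq_div_iff hd]; unfold u; field_simp; unfold denom; ring
  rw [key]
  generalize x + y + z = s at hs ⊢
  generalize x * y + y * z + z * x = e at he ⊢
  apply_rules [div_mem, sub_mem, add_mem, mul_mem, pow_mem, ofNat_mem]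

end Masuda

open IntermediateField Polynomial Module

section FixedField

variable {k K : Type*} [Field k] [Field K] [Algebra k K]

theorem IntermediateField.mem_fixedField_zpowers_iff {σ : K ≃ₐ[k] K} {a : K} :
    a ∈ fixedField (Subgroup.zpowers σ) ↔ σ a = a := by
  refine ⟨fun h => h ⟨σ, Subgroup.mem_zpowers σ⟩, fun h τ => ?_⟩
  exact (Subgroup.zpowers_le.2 h : Subgroup.zpowers σ ≤ MulAction.stabilizer _ a) τ.2

theorem AlgEquiv.eq_one_of_adjoin_eq_top {s : Set K} (hs : adjoin k s = ⊤) {τ : K ≃ₐ[k] K}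
    (h : ∀ a ∈ s, τ a = a) : τ = 1 := by
  have : ⊤ ≤ fixedField (Subgroup.zpowers τ) :=
    hs ▸ adjoin_le_iff.2 fun a ha => mem_fixedField_zpowers_iff.2 (h a ha)
  exact AlgEquiv.ext fun a => mem_fixedField_zpowers_iff.1 (this (mem_top (x := a)))

theorem IntermediateField.finrank_fixedField_zpowers {σ : K ≃ₐ[k] K} (h : IsOfFinOrder σ) :
    finrank (fixedField (Subgroup.zpowers σ)) K = orderOf σ := by
  have : Finite (Subgroup.zpowers σ) := h.finite_zpowers
  have := Fintype.ofFinite (Subgroup.zpowers σ)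
  rw [← Nat.card_zpowers, Nat.card_eq_fintype_card]
  exact FixedPoints.finrank_eq_card _ K

end FixedField

theorem IntermediateField.finiteDimensional_and_finrank_le_of_adjoin_simple_eq_top
    {F E : Type*} [Field F] [Field E] [Algebra F E] {α : E} (hα : F⟮α⟯ = ⊤) {p : F[X]}
    (hp : p ≠ 0) (hpα : aeval α p = 0) : FiniteDimensional F E ∧ finrank F E ≤ p.natDegree := by
  have hint : IsIntegral F α := IsAlgebraic.isIntegral ⟨p, hp, hpα⟩
  have hfin := adjoin.finiteDimensional hint
  rw [hα] at hfin
  refine ⟨Module.Finite.equiv topEquiv.toLinearEquiv, ?_⟩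
  rw [← finrank_top', ← hα, adjoin.finrank hint]
  exact natDegree_le_of_dvd (minpoly.dvd F α hpα) hp

namespace Masuda

variable {k K : Type*} [Field k] [Field K] [Algebra k K] {x y z : K}

theorem adjoin_le_fixedField {σ : K ≃ₐ[k] K} (hσx : σ x = y) (hσy : σ y = z) (hσz : σ z = x) :
    k⟮x + y + z, u x y z, v x y z⟯ ≤ fixedField (Subgroup.zpowers σ) := by
  rw [adjoin_le_iff]
  rintro a (rfl | rfl | rfl) <;> rw [SetLike.mem_coe, mem_fixedField_zpowers_iff]
  · rw [map_add, map_add, hσx, hσy, hσz]; ring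
  · rw [map_u, hσx, hσy, hσz, u_rotate]
  · rw [map_v, hσx, hσy, hσz, v_rotate]

theorem finiteDimensional_and_finrank_le_three (hgen : k⟮x, y, z⟯ = ⊤)
    (hxy : x ≠ y) (hxz : x ≠ z) (hN : denom x y z ≠ 0) :
    FiniteDimensional k⟮x + y + z, u x y z, v x y z⟯ K ∧
      finrank k⟮x + y + z, u x y z, v x y z⟯ K ≤ 3 := by
  set L := k⟮x + y + z, u x y z, v x y z⟯
  have hs : x + y + z ∈ L := subset_adjoin k _ (by simp)
  have hu : u x y z ∈ L := subset_adjoin k _ (by simp)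
  have hv : v x y z ∈ L := subset_adjoin k _ (by simp)
  have he2 : x * y + y * z + z * x ∈ L := esymm_two_eq hN ▸ by
    apply_rules [sub_mem, add_mem, mul_mem, pow_mem, ofNat_mem]
  have he3 : x * y * z ∈ L := esymm_three_eq hN ▸ by
    apply_rules [sub_mem, add_mem, mul_mem, pow_mem, ofNat_mem]
  have htop : L⟮x⟯ = ⊤ := by
    refine restrictScalars_eq_top_iff.1 (top_le_iff.1 (hgen ▸ adjoin_le_iff.2 ?_))
    have hL : ∀ a ∈ L, a ∈ L⟮x⟯ := fun a ha => L⟮x⟯.algebraMap_mem ⟨a, ha⟩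
    have hx : x ∈ L⟮x⟯ := mem_adjoin_simple_self L x
    have hy : y ∈ L⟮x⟯ := y_mem_of_x_mem hN hxy hxz hx (hL _ hs) (hL _ he2) (hL _ hu)
    have hz : z ∈ L⟮x⟯ := by convert sub_mem (sub_mem (hL _ hs) hx) hy using 1; ring
    simp [Set.insert_subset_iff, hx, hy, hz]
  let p : Cubic L := ⟨1, ⟨-(x + y + z), neg_mem hs⟩, ⟨_, he2⟩, ⟨-(x * y * z), neg_mem he3⟩⟩
  have hpx : aeval x p.toPoly = 0 := by
    simp only [p, Cubic.toPoly, map_add, map_mul, map_pow, map_one, one_mul, aeval_X, aeval_C,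
      IntermediateField.algebraMap_apply]
    ring
  have h := finiteDimensional_and_finrank_le_of_adjoin_simple_eq_top htop
    (Cubic.ne_zero_of_a_ne_zero one_ne_zero) hpx
  rwa [Cubic.natDegree_of_a_ne_zero one_ne_zero] at h

theorem fixedField_zpowers_eq_adjoin (hgen : k⟮x, y, z⟯ = ⊤) (σ : K ≃ₐ[k] K)
    (hσx : σ x = y) (hσy : σ y = z) (hσz : σ z = x) (hxy : x ≠ y) (hN : denom x y z ≠ 0) :
    fixedField (Subgroup.zpowers σ) = k⟮x + y + z, u x y z, v x y z⟯ := by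
  have hxz : x ≠ z := by
    rintro rfl
    exact hxy (hσz.symm.trans hσx)
  have hσ3 : σ ^ 3 = 1 :=
    AlgEquiv.eq_one_of_adjoin_eq_top hgen (by simp [pow_succ, hσx, hσy, hσz])
  have hord : orderOf σ = 3 := orderOf_eq_prime hσ3 fun h => hxy (by simp [← hσx, h])
  obtain ⟨hfin, hrank⟩ := finiteDimensional_and_finrank_le_three hgen hxy hxz hN
  refine (eq_of_le_of_finrank_le' (adjoin_le_fixedField hσx hσy hσz) ?_).symm
  rwa [finrank_fixedField_zpowers (isOfFinOrder_iff_pow_eq_one.2 ⟨3, three_pos, hσ3⟩), hord]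

end Masuda

section RationalFunctionField

open MvPolynomial

variable {k ι K : Type*} [Field k] [Field K] [Algebra (MvPolynomial ι k) K]
  [IsFractionRing (MvPolynomial ι k) K] [Algebra k K] [IsScalarTower k (MvPolynomial ι k) K]

theorem IsFractionRing.adjoin_range_algebraMap_X_eq_top :
    adjoin k (Set.range fun i => algebraMap (MvPolynomial ι k) K (X i)) = ⊤ := by
  set E := adjoin k (Set.range fun i => algebraMap (MvPolynomial ι k) K (X i))
  have hpoly (p : MvPolynomial ι k) : algebraMap (MvPolynomial ι k) K p ∈ E := by
    apply algebra_adjoin_le_adjoin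
    rw [Algebra.adjoin_range_eq_range_aeval]
    exact ⟨p, (DFunLike.congr_fun (aeval_unique (IsScalarTower.toAlgHom k _ K)) p).symm⟩
  refine eq_top_iff.2 fun a _ => ?_
  obtain ⟨p, q, -, rfl⟩ := IsFractionRing.div_surjective (MvPolynomial ι k) a
  exact div_mem (hpoly p) (hpoly q)

end RationalFunctionField

/-- **Masuda's theorem (s₁ form).** Let `σ` be the `k`-automorphism of `k(x,y,z)` cyclically
permuting `x, y, z`. Then `k(x,y,z)^⟨σ⟩ = k(s₁, u, v)` with `s₁ = x+y+z` and `u, v` as below. -/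
theorem stmt_2 {k : Type*} [Field k]
    (x y z : FractionRing (MvPolynomial (Fin 3) k))
    (hx : x = algebraMap (MvPolynomial (Fin 3) k) (FractionRing (MvPolynomial (Fin 3) k))
      (MvPolynomial.X 0))
    (hy : y = algebraMap (MvPolynomial (Fin 3) k) (FractionRing (MvPolynomial (Fin 3) k))
      (MvPolynomial.X 1))
    (hz : z = algebraMap (MvPolynomial (Fin 3) k) (FractionRing (MvPolynomial (Fin 3) k))
      (MvPolynomial.X 2))
    (σ : FractionRing (MvPolynomial (Fin 3) k) ≃ₐ[k] FractionRing (MvPolynomial (Fin 3) k))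
    (hσx : σ x = y) (hσy : σ y = z) (hσz : σ z = x) :
    IntermediateField.fixedField (Subgroup.zpowers σ) =
      IntermediateField.adjoin k
        {x + y + z,
         (x ^ 2 * y + y ^ 2 * z + z ^ 2 * x - 3 * (x * y * z)) /
           (x ^ 2 + y ^ 2 + z ^ 2 - x * y - y * z - z * x),
         (x * y ^ 2 + y * z ^ 2 + z * x ^ 2 - 3 * (x * y * z)) /
           (x ^ 2 + y ^ 2 + z ^ 2 - x * y - y * z - z * x)} := by
  have hinj := IsFractionRing.injective (MvPolynomial (Fin 3) k)
    (FractionRing (MvPolynomial (Fin 3) k))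
  subst hx hy hz
  refine Masuda.fixedField_zpowers_eq_adjoin ?_ σ hσx hσy hσz ?_ ?_
  · rw [← IsFractionRing.adjoin_range_algebraMap_X_eq_top (ι := Fin 3)]
    congr 1
    ext; simp [Fin.exists_fin_succ, eq_comm]
  · exact hinj.ne (MvPolynomial.X_injective.ne (by decide))
  · rw [← Masuda.map_denom]
    refine (map_ne_zero_iff _ hinj).2 fun h => ?_
    simpa [Masuda.denom] using congrArg (MvPolynomial.eval ![1, 0, 0]) h
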